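/- arXiv:2508.12763 — 3 statements merged into one kernel-verified Lean document; each statement's English description precedes it below -/
import Mathlib

section
/- Let k ≥ 2 be an integer and F a (k-1)-dimensional simplicial complex. Then for every s ∈ {2,…,k} and every n, ex(n,F) ≥ ex_s^{cl+}(n,F^s) + Σ_{r=0}^{s-1} C(n,r); in particular ex(n,F) ≥ max{ ex_s^{cl+}(n,F^s) + Σ_{r=0}^{s-1} C(n,r) : s = 2,…,k }. -/
open Filter Asymptotics

/-- A finite hypergraph with vertices in `ℕ`. -/
structure FinHypergraph where
  verts : Finset ℕ
  edges : Finset (Finset ℕ)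
  subset_verts : ∀ e ∈ edges, e ⊆ verts

namespace FinHypergraph

/-- `G` is `k`-uniform if every edge has exactly `k` vertices. -/
def IsUniform (G : FinHypergraph) (k : ℕ) : Prop := ∀ e ∈ G.edges, e.card = k

/-- `H` contains a copy of `F`: an injection of `V(F)` into `V(H)` mapping
every edge of `F` to an edge of `H`. -/
def ContainsCopy (H F : FinHypergraph) : Prop :=
  ∃ f : ℕ → ℕ, Set.InjOn f ↑F.verts ∧ (∀ v ∈ F.verts, f v ∈ H.verts) ∧
    ∀ e ∈ F.edges, e.image f ∈ H.edges

/-- `F` is isomorphic to `G`. -/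
def IsIsoTo (F G : FinHypergraph) : Prop :=
  ∃ f : ℕ → ℕ, Set.InjOn f ↑F.verts ∧ F.verts.image f = G.verts ∧
    F.edges.image (Finset.image f) = G.edges

/-- The `s`-th layer `F^s`: the `s`-uniform hypergraph on `V(F)` consisting of all
`s`-element edges of `F`. -/
def layer (F : FinHypergraph) (s : ℕ) : FinHypergraph where
  verts := F.verts
  edges := F.edges.filter fun e => e.card = s
  subset_verts := fun e he => F.subset_verts e (Finset.mem_filter.mp he).1

/-- The set of maximal edges (the generating set) of `F`. -/
def maximalEdges (F : FinHypergraph) : Finset (Finset ℕ) :=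
  F.edges.filter fun e => ∀ e' ∈ F.edges, e ⊆ e' → e = e'

/-- `T` forms a clique in the `k`-uniform hypergraph `G`: `T` is a singleton,
`T` is a subset of some edge, or every `k`-element subset of `T` is an edge. -/
def IsCliqueIn (G : FinHypergraph) (k : ℕ) (T : Finset ℕ) : Prop :=
  T ⊆ G.verts ∧ (T.card = 1 ∨ (∃ e ∈ G.edges, T ⊆ e) ∨
    ∀ S ∈ T.powersetCard k, S ∈ G.edges)

/-- The number of cliques in `G` (viewed as a `k`-uniform hypergraph). -/
noncomputable def cliqueCount (G : FinHypergraph) (k : ℕ) : ℕ :=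
  Set.ncard {T : Finset ℕ | G.IsCliqueIn k T}

/-- The number of cliques of order at least `k` in `G`. -/
noncomputable def cliquePlusCount (G : FinHypergraph) (k : ℕ) : ℕ :=
  Set.ncard {T : Finset ℕ | G.IsCliqueIn k T ∧ k ≤ T.card}

/-- `F` is `d`-dimensional: the maximum edge size is `d + 1`. -/
def IsDimensional (F : FinHypergraph) (d : ℕ) : Prop :=
  (∀ e ∈ F.edges, e.card ≤ d + 1) ∧ ∃ e ∈ F.edges, e.card = d + 1

/-- `H` is edge-degenerate: its edges can be ordered `e₁, …, eₘ` so that for every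
`i ≥ 2` there is `j < i` with `eᵢ ∩ (e₁ ∪ ⋯ ∪ e_{i-1}) ⊆ eⱼ`. -/
def EdgeDegenerate (H : FinHypergraph) : Prop :=
  ∃ l : List (Finset ℕ), l.Nodup ∧ l.toFinset = H.edges ∧
    ∀ i : Fin l.length, 1 ≤ (i : ℕ) →
      ∃ j : Fin l.length, (j : ℕ) < (i : ℕ) ∧
        l.get i ∩ (l.take (i : ℕ)).foldr (· ∪ ·) ∅ ⊆ l.get j

/-- `G` is `l`-full (as a `k`-uniform hypergraph): every `(k-1)`-element vertex subset
is contained in either none or at least `l` edges. -/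
def IsFull (G : FinHypergraph) (l k : ℕ) : Prop :=
  ∀ S ⊆ G.verts, S.card = k - 1 →
    (G.edges.filter fun e => S ⊆ e) = ∅ ∨ l ≤ (G.edges.filter fun e => S ⊆ e).card

end FinHypergraph

/-- An abstract simplicial complex: contains the empty edge, all singletons of its
vertex set, and is closed under taking subsets. -/
def IsSimplicialComplex (H : FinHypergraph) : Prop :=
  ∅ ∈ H.edges ∧ (∀ v ∈ H.verts, {v} ∈ H.edges) ∧
    ∀ e ∈ H.edges, ∀ e', e' ⊆ e → e' ∈ H.edges

/-- `𝓓(H)`: the simplicial complex on `V(H)` whose edges are all singletons together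
with all subsets of edges of `H`. -/
def downClosure (H : FinHypergraph) : FinHypergraph where
  verts := H.verts
  edges := insert ∅ ((H.verts.image fun v => ({v} : Finset ℕ)) ∪
    H.edges.biUnion Finset.powerset)
  subset_verts := by
    intro e he
    simp only [Finset.mem_insert, Finset.mem_union, Finset.mem_image, Finset.mem_biUnion,
      Finset.mem_powerset] at he
    rcases he with rfl | ⟨v, hv, rfl⟩ | ⟨a, ha, hea⟩
    · exact Finset.empty_subset _
    · exact Finset.singleton_subset_iff.mpr hv
    · exact hea.trans (H.subset_verts a ha)

/-- The simplicial complex generated by a finite family `E` of edges: its vertex set is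
the union of the members of `E` and its edges are all subsets of members of `E`. -/
def genComplex (E : Finset (Finset ℕ)) : FinHypergraph where
  verts := E.sup id
  edges := insert ∅ (E.biUnion Finset.powerset)
  subset_verts := by
    intro e he
    simp only [Finset.mem_insert, Finset.mem_biUnion, Finset.mem_powerset] at he
    rcases he with rfl | ⟨a, ha, hea⟩
    · exact Finset.empty_subset _
    · intro x hx
      exact Finset.mem_sup.mpr ⟨a, ha, hea hx⟩

/-- `ex(n, F)`: the maximum number of edges in an `F`-free simplicial complex
on `n` vertices. -/
noncomputable def exSC (n : ℕ) (F : FinHypergraph) : ℕ :=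
  sSup {m | ∃ H : FinHypergraph, IsSimplicialComplex H ∧ H.verts.card = n ∧
    ¬ H.ContainsCopy F ∧ H.edges.card = m}

/-- `ex_k^{cl}(n, 𝓗)`: the maximum number of cliques in an `n`-vertex `k`-uniform
hypergraph containing no copy of any member of `𝓗`. -/
noncomputable def exCl (k n : ℕ) (HF : Set FinHypergraph) : ℕ :=
  sSup {m | ∃ G : FinHypergraph, G.IsUniform k ∧ G.verts.card = n ∧
    (∀ H ∈ HF, ¬ G.ContainsCopy H) ∧ G.cliqueCount k = m}

/-- `ex_k^{cl+}(n, 𝓗)`: the maximum number of cliques of order at least `k` in an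
`n`-vertex `k`-uniform hypergraph containing no copy of any member of `𝓗`. -/
noncomputable def exClPlus (k n : ℕ) (HF : Set FinHypergraph) : ℕ :=
  sSup {m | ∃ G : FinHypergraph, G.IsUniform k ∧ G.verts.card = n ∧
    (∀ H ∈ HF, ¬ G.ContainsCopy H) ∧ G.cliquePlusCount k = m}

/-- `N(T, G)`: the number of copies of `T` in `G`, i.e. the number of subhypergraphs
of `G` (given by a vertex set and an edge set) that are images of `T` under an injection. -/
noncomputable def copyCount (T G : FinHypergraph) : ℕ :=
  Set.ncard {p : Finset ℕ × Finset (Finset ℕ) |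
    ∃ f : ℕ → ℕ, Set.InjOn f ↑T.verts ∧ (∀ v ∈ T.verts, f v ∈ G.verts) ∧
      (∀ e ∈ T.edges, e.image f ∈ G.edges) ∧
      T.verts.image f = p.1 ∧ T.edges.image (Finset.image f) = p.2}

/-- `ex_k(n, T, 𝓗)`: the maximum number of copies of `T` in an `n`-vertex `k`-uniform
hypergraph containing no copy of any member of `𝓗`. -/
noncomputable def exGen (k n : ℕ) (T : FinHypergraph) (HF : Set FinHypergraph) : ℕ :=
  sSup {m | ∃ G : FinHypergraph, G.IsUniform k ∧ G.verts.card = n ∧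
    (∀ H ∈ HF, ¬ G.ContainsCopy H) ∧ copyCount T G = m}

/-- A `(k-1)`-dimensional simplicial complex `F` is trivial if for all sufficiently
large `n`, `ex(n,F) = ex_k^{cl+}(n, F^k) + ∑_{r=0}^{k-1} C(n,r)`. -/
def IsTrivialSC (k : ℕ) (F : FinHypergraph) : Prop :=
  ∀ᶠ n in atTop, exSC n F = exClPlus k n {F.layer k} + ∑ r ∈ Finset.range k, n.choose r

/-- The `k`-uniform matching `M^k_t` with `t` pairwise disjoint edges. -/
def matchingHG (k t : ℕ) : FinHypergraph where
  verts := Finset.range (t * k)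
  edges := (Finset.range t).image fun i => (Finset.range k).image fun j => i * k + j
  subset_verts := by
    intro e he
    simp only [Finset.mem_image, Finset.mem_range] at he
    obtain ⟨i, hi, rfl⟩ := he
    intro x hx
    simp only [Finset.mem_image, Finset.mem_range] at hx
    obtain ⟨j, hj, rfl⟩ := hx
    simp only [Finset.mem_range]
    calc i * k + j < i * k + k := by omega
      _ = (i + 1) * k := by ring
      _ ≤ t * k := Nat.mul_le_mul (by omega) le_rfl

/-- The `i`-th edge of the `k`-uniform linear cycle of length `t`. -/
def cycleEdge (k t i : ℕ) : Finset ℕ :=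
  (Finset.range k).image fun j => (i * (k - 1) + j) % (t * (k - 1))

/-- The `k`-uniform linear cycle `C^k_t` of length `t`. -/
def linearCycleHG (k t : ℕ) : FinHypergraph where
  verts := (Finset.range t).sup (cycleEdge k t)
  edges := (Finset.range t).image (cycleEdge k t)
  subset_verts := by
    intro e he
    simp only [Finset.mem_image] at he
    obtain ⟨i, hi, rfl⟩ := he
    intro x hx
    exact Finset.mem_sup.mpr ⟨i, hi, hx⟩

/-- The `k`-uniform linear path `P^k_t` of length `t` (obtained from `C^k_{t+1}` by
deleting one edge). -/
def linearPathHG (k t : ℕ) : FinHypergraph where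
  verts := (Finset.range t).sup (cycleEdge k (t + 1))
  edges := (Finset.range t).image (cycleEdge k (t + 1))
  subset_verts := by
    intro e he
    simp only [Finset.mem_image] at he
    obtain ⟨i, hi, rfl⟩ := he
    intro x hx
    exact Finset.mem_sup.mpr ⟨i, hi, hx⟩

/-- The `k`-uniform tight path `TP^k_t` of length `t`, on vertices `{0, …, k+t-2}`. -/
def tightPathHG (k t : ℕ) : FinHypergraph where
  verts := Finset.range (k + t - 1)
  edges := (Finset.range t).image fun i => (Finset.range k).image fun j => i + j
  subset_verts := by
    intro e he
    simp only [Finset.mem_image, Finset.mem_range] at he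
    obtain ⟨i, hi, rfl⟩ := he
    intro x hx
    simp only [Finset.mem_image, Finset.mem_range] at hx
    obtain ⟨j, hj, rfl⟩ := hx
    simp only [Finset.mem_range]
    omega

/-- The complete `k`-uniform hypergraph `K^k_r` on `r` vertices. -/
def completeHG (k r : ℕ) : FinHypergraph where
  verts := Finset.range r
  edges := (Finset.range r).powersetCard k
  subset_verts := fun _ he => (Finset.mem_powersetCard.mp he).1

/-- The star `S^k_{n,l}`: the `n`-vertex `k`-uniform hypergraph whose edges are all
`k`-element subsets meeting a fixed set of `l` vertices. -/
def starHG (k n l : ℕ) : FinHypergraph where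
  verts := Finset.range n
  edges := ((Finset.range n).powersetCard k).filter fun e => ∃ v ∈ e, v < l
  subset_verts := fun _ he => (Finset.mem_powersetCard.mp (Finset.mem_filter.mp he).1).1

open scoped Classical

lemma cliquePlus_eq_filter (G : FinHypergraph) (s : ℕ) :
    G.cliquePlusCount s =
      (G.verts.powerset.filter fun T => G.IsCliqueIn s T ∧ s ≤ T.card).card := by
  classical
  rw [FinHypergraph.cliquePlusCount, ← Set.ncard_coe_finset]
  congr 1
  ext T
  simp only [Finset.coe_filter, Finset.mem_powerset, Set.mem_setOf_eq]
  exact ⟨fun h => ⟨h.1.1, h⟩, fun h => h.2⟩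

lemma count_small (V : Finset ℕ) (s : ℕ) :
    (V.powerset.filter fun T => T.card < s).card
      = ∑ r ∈ Finset.range s, V.card.choose r := by
  classical
  have h : (V.powerset.filter fun T => T.card < s)
      = (Finset.range s).biUnion (fun r => V.powersetCard r) := by
    ext T
    simp only [Finset.mem_filter, Finset.mem_powerset, Finset.mem_biUnion,
      Finset.mem_range, Finset.mem_powersetCard]
    exact ⟨fun ⟨h1, h2⟩ => ⟨T.card, h2, h1, rfl⟩,
      fun ⟨r, hr, h1, h2⟩ => ⟨h1, h2 ▸ hr⟩⟩
  rw [h, Finset.card_biUnion]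
  · simp [Finset.card_powersetCard]
  · intro i _ j _ hij
    rw [Function.onFun, Finset.disjoint_left]
    intro T hTi hTj
    exact hij ((Finset.mem_powersetCard.mp hTi).2 ▸ (Finset.mem_powersetCard.mp hTj).2)

theorem extremal_number_layer_lower_bound (k : ℕ) (hk : 2 ≤ k) (F : FinHypergraph)
    (hF : IsSimplicialComplex F) (hdim : F.IsDimensional (k - 1))
    (s : ℕ) (hs2 : 2 ≤ s) (hsk : s ≤ k) (n : ℕ) :
    exClPlus s n {F.layer s} + ∑ r ∈ Finset.range s, n.choose r ≤ exSC n F := by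
  classical
  -- the set defining exSC is bounded above
  have hbddSC : BddAbove {m | ∃ H : FinHypergraph, IsSimplicialComplex H ∧ H.verts.card = n ∧
      ¬ H.ContainsCopy F ∧ H.edges.card = m} := by
    refine ⟨2 ^ n, ?_⟩
    rintro m ⟨H, -, hcard, -, rfl⟩
    calc H.edges.card ≤ H.verts.powerset.card :=
          Finset.card_le_card fun e he => Finset.mem_powerset.mpr (H.subset_verts e he)
      _ = 2 ^ n := by rw [Finset.card_powerset, hcard]
  -- there is an s-edge in F
  obtain ⟨e0, he0, he0card⟩ := hdim.2
  obtain ⟨t0, ht0sub, ht0card⟩ := Finset.exists_subset_card_eq (s := e0) (n := s) (by omega)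
  have ht0 : t0 ∈ (F.layer s).edges :=
    Finset.mem_filter.mpr ⟨hF.2.2 e0 he0 t0 ht0sub, ht0card⟩
  -- the set defining exClPlus is nonempty and bounded
  set Sp := {m | ∃ G : FinHypergraph, G.IsUniform s ∧ G.verts.card = n ∧
      (∀ H ∈ ({F.layer s} : Set FinHypergraph), ¬ G.ContainsCopy H) ∧
      G.cliquePlusCount s = m} with hSp
  have hne : Sp.Nonempty := by
    refine ⟨_, ⟨Finset.range n, ∅, by simp⟩, ?_, by simp, ?_, rfl⟩
    · intro e he; simp at he
    · rintro H rfl ⟨f, -, -, hmap⟩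
      simpa using hmap t0 ht0
  have hbddSp : BddAbove Sp := by
    refine ⟨2 ^ n, ?_⟩
    rintro m ⟨G, -, hGn, -, rfl⟩
    rw [cliquePlus_eq_filter]
    calc (G.verts.powerset.filter fun T => G.IsCliqueIn s T ∧ s ≤ T.card).card
        ≤ G.verts.powerset.card := Finset.card_filter_le _ _
      _ = 2 ^ n := by rw [Finset.card_powerset, hGn]
  have hmem : sSup Sp ∈ Sp := Nat.sSup_mem hne hbddSp
  obtain ⟨G, hGu, hGn, hGfree, hGcount⟩ := hmem
  -- build the simplicial complex
  set Hc : FinHypergraph :=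
    ⟨G.verts, G.verts.powerset.filter
        (fun T => (G.IsCliqueIn s T ∧ s ≤ T.card) ∨ T.card < s),
      fun e he => Finset.mem_powerset.mp (Finset.mem_filter.mp he).1⟩ with hHc
  have hHsc : IsSimplicialComplex Hc := by
    refine ⟨?_, ?_, ?_⟩
    · exact Finset.mem_filter.mpr ⟨Finset.mem_powerset.mpr (Finset.empty_subset _),
        Or.inr (by simp; omega)⟩
    · intro v hv
      exact Finset.mem_filter.mpr ⟨Finset.mem_powerset.mpr
        (Finset.singleton_subset_iff.mpr hv), Or.inr (by simp; omega)⟩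
    · intro e he e' he'
      obtain ⟨hesub, hprop⟩ := Finset.mem_filter.mp he
      refine Finset.mem_filter.mpr ⟨Finset.mem_powerset.mpr
        (he'.trans (Finset.mem_powerset.mp hesub)), ?_⟩
      by_cases hsmall : e'.card < s
      · exact Or.inr hsmall
      push_neg at hsmall
      rcases hprop with ⟨⟨hcsub, hcl⟩, hcard⟩ | hlt
      · refine Or.inl ⟨⟨he'.trans hcsub, ?_⟩, hsmall⟩
        rcases hcl with h1 | ⟨g, hg, hsub⟩ | hall
        · have := Finset.card_le_card he'; omega
        · exact Or.inr (Or.inl ⟨g, hg, he'.trans hsub⟩)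
        · refine Or.inr (Or.inr fun S hS => hall S ?_)
          obtain ⟨hS1, hS2⟩ := Finset.mem_powersetCard.mp hS
          exact Finset.mem_powersetCard.mpr ⟨hS1.trans he', hS2⟩
      · have := Finset.card_le_card he'; omega
  have hHn : Hc.verts.card = n := hGn
  -- Hc is F-free
  have hHfree : ¬ Hc.ContainsCopy F := by
    rintro ⟨f, hinj, hverts, hedges⟩
    refine hGfree (F.layer s) rfl ⟨f, hinj, hverts, ?_⟩
    intro e he
    obtain ⟨heF, hecard⟩ := Finset.mem_filter.mp he
    have himg : e.image f ∈ Hc.edges := hedges e heF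
    have hcardimg : (e.image f).card = s := by
      rw [Finset.card_image_of_injOn (hinj.mono (Finset.coe_subset.mpr
        (F.subset_verts e heF)))]
      exact hecard
    obtain ⟨-, hprop⟩ := Finset.mem_filter.mp himg
    rcases hprop with ⟨⟨-, hcl⟩, -⟩ | hlt
    · rcases hcl with h1 | ⟨g, hg, hsub⟩ | hall
      · omega
      · have hgcard : g.card = s := hGu g hg
        have : e.image f = g :=
          Finset.eq_of_subset_of_card_le hsub (by omega)
        rwa [this]
      · exact hall _ (Finset.mem_powersetCard.mpr ⟨Finset.Subset.refl _, hcardimg⟩)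
    · omega
  -- count the edges of Hc
  have hcount : Hc.edges.card = G.cliquePlusCount s + ∑ r ∈ Finset.range s, n.choose r := by
    have hdisj : Disjoint
        (G.verts.powerset.filter fun T => G.IsCliqueIn s T ∧ s ≤ T.card)
        (G.verts.powerset.filter fun T => T.card < s) := by
      rw [Finset.disjoint_left]
      intro T hT1 hT2
      have h1 := (Finset.mem_filter.mp hT1).2.2
      have h2 := (Finset.mem_filter.mp hT2).2
      omega
    have : Hc.edges = (G.verts.powerset.filter fun T => G.IsCliqueIn s T ∧ s ≤ T.card)
        ∪ (G.verts.powerset.filter fun T => T.card < s) := by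
      simp only [hHc, Finset.filter_or]
    rw [this, Finset.card_union_of_disjoint hdisj, ← cliquePlus_eq_filter,
      count_small, hGn]
  calc exClPlus s n {F.layer s} + ∑ r ∈ Finset.range s, n.choose r
      = Hc.edges.card := by rw [hcount, hGcount]; rfl
    _ ≤ exSC n F := le_csSup hbddSC ⟨Hc, hHsc, hHn, hHfree, rfl⟩
end

section
/- Let k ≥ 2 be an integer and let F be a (k-1)-dimensional simplicial complex such that the set of maximal edges of F equals the set of k-element edges of F (i.e., 𝓔(F) = E(F^k)). Then F is trivial: for all sufficiently large n, ex(n,F) = ex_k^{cl+}(n,F^k) + Σ_{r=0}^{k-1} C(n,r). -/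
open Filter Asymptotics

/- ### Auxiliary material for the main theorem -/

open scoped Classical in
/-- The simplicial complex of all small subsets and all cliques of a `k`-uniform `G`. -/
noncomputable def cliqueComplex (G : FinHypergraph) (k : ℕ) : FinHypergraph where
  verts := G.verts
  edges := G.verts.powerset.filter (fun T => T.card < k ∨ G.IsCliqueIn k T)
  subset_verts := fun _ he => Finset.mem_powerset.mp (Finset.mem_filter.mp he).1

lemma aux_exists_maximal (F : FinHypergraph) {e : Finset ℕ} (he : e ∈ F.edges) :
    ∃ e' ∈ F.maximalEdges, e ⊆ e' := by
  obtain ⟨e', he', hmaxe⟩ := Finset.exists_max_image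
    (F.edges.filter (fun x => e ⊆ x)) Finset.card ⟨e, by simp [he]⟩
  rw [Finset.mem_filter] at he'
  refine ⟨e', Finset.mem_filter.mpr ⟨he'.1, ?_⟩, he'.2⟩
  intro e'' he'' hsub
  exact Finset.eq_of_subset_of_card_le hsub
    (hmaxe e'' (Finset.mem_filter.mpr ⟨he'', he'.2.trans hsub⟩))

lemma aux_clique_iff (G : FinHypergraph) {k : ℕ} (hG : G.IsUniform k) {T : Finset ℕ}
    (h2 : 2 ≤ k) (hT : k ≤ T.card) :
    G.IsCliqueIn k T ↔ T ⊆ G.verts ∧ ∀ S ∈ T.powersetCard k, S ∈ G.edges := by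
  constructor
  · rintro ⟨hv, h1 | ⟨e, he, hTe⟩ | h⟩
    · omega
    · have hek := hG e he
      have hTeq : T = e := Finset.eq_of_subset_of_card_le hTe (by omega)
      subst hTeq
      refine ⟨hv, fun S hS => ?_⟩
      rw [Finset.mem_powersetCard] at hS
      have hST : S = T := Finset.eq_of_subset_of_card_le hS.1 (by omega)
      rwa [hST]
    · exact ⟨hv, h⟩
  · rintro ⟨hv, h⟩
    exact ⟨hv, Or.inr (Or.inr h)⟩

lemma aux_small_count (s : Finset ℕ) (k : ℕ) :
    (s.powerset.filter (fun T => T.card < k)).card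
      = ∑ r ∈ Finset.range k, s.card.choose r := by
  have h : s.powerset.filter (fun T => T.card < k)
      = (Finset.range k).biUnion (fun r => s.powersetCard r) := by
    ext T
    simp only [Finset.mem_filter, Finset.mem_powerset, Finset.mem_biUnion, Finset.mem_range,
      Finset.mem_powersetCard]
    constructor
    · rintro ⟨h1, h2⟩; exact ⟨T.card, h2, h1, rfl⟩
    · rintro ⟨r, hr, h1, rfl⟩; exact ⟨h1, hr⟩
  rw [h, Finset.card_biUnion]
  · simp [Finset.card_powersetCard]
  · intro x hx y hy hxy
    rw [Function.onFun, Finset.disjoint_left]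
    intro a ha hay
    rw [Finset.mem_powersetCard] at ha hay
    omega

lemma aux_cpc_le (G : FinHypergraph) (k : ℕ) : G.cliquePlusCount k ≤ 2 ^ G.verts.card := by
  unfold FinHypergraph.cliquePlusCount
  calc Set.ncard {T : Finset ℕ | G.IsCliqueIn k T ∧ k ≤ T.card}
      ≤ Set.ncard (↑G.verts.powerset : Set (Finset ℕ)) := by
        apply Set.ncard_le_ncard
        · rintro T ⟨⟨h1, _⟩, _⟩; simpa using h1
        · exact (G.verts.powerset).finite_toSet
    _ = 2 ^ G.verts.card := by rw [Set.ncard_coe_finset, Finset.card_powerset]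

theorem trivial_of_maximalEdges_eq_top_layer (k : ℕ) (hk : 2 ≤ k) (F : FinHypergraph)
    (hF : IsSimplicialComplex F) (hdim : F.IsDimensional (k - 1))
    (hmax : F.maximalEdges = (F.layer k).edges) :
    IsTrivialSC k F := by
  classical
  refine Filter.Eventually.of_forall (fun n => ?_)
  -- F has an edge of size k
  obtain ⟨e₀, he₀, he₀k'⟩ := hdim.2
  have he₀k : e₀.card = k := by omega
  have hFKne : e₀ ∈ (F.layer k).edges := Finset.mem_filter.mpr ⟨he₀, he₀k⟩
  -- every edge of F is contained in a k-element edge of F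
  have hmaxk : ∀ e ∈ F.edges, ∃ e' ∈ F.edges, e'.card = k ∧ e ⊆ e' := by
    intro e he
    obtain ⟨e', he', hsub⟩ := aux_exists_maximal F he
    rw [hmax] at he'
    rw [FinHypergraph.layer, Finset.mem_filter] at he'
    exact ⟨e', he'.1, he'.2, hsub⟩
  -- the extremal sets
  set Scl : Set ℕ := {m | ∃ G : FinHypergraph, G.IsUniform k ∧ G.verts.card = n ∧
    (∀ H ∈ ({F.layer k} : Set FinHypergraph), ¬ G.ContainsCopy H) ∧ G.cliquePlusCount k = m}
    with hScl
  have hbddCl : BddAbove Scl := by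
    refine ⟨2 ^ n, ?_⟩
    rintro m ⟨G, _, hcard, _, rfl⟩
    calc G.cliquePlusCount k ≤ 2 ^ G.verts.card := aux_cpc_le G k
      _ = 2 ^ n := by rw [hcard]
  have hneCl : Scl.Nonempty := by
    refine ⟨(FinHypergraph.mk (Finset.range n) ∅ (by simp)).cliquePlusCount k,
      FinHypergraph.mk (Finset.range n) ∅ (by simp), ?_, by simp, ?_, rfl⟩
    · intro e he; simp at he
    · intro H hH
      rw [Set.mem_singleton_iff] at hH
      subst hH
      rintro ⟨f, -, -, hedge⟩
      have := hedge e₀ hFKne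
      simp at this
  set Ssc : Set ℕ := {m | ∃ H : FinHypergraph, IsSimplicialComplex H ∧ H.verts.card = n ∧
    ¬ H.ContainsCopy F ∧ H.edges.card = m} with hSsc
  have hbddSc : BddAbove Ssc := by
    refine ⟨2 ^ n, ?_⟩
    rintro m ⟨H, _, hcard, _, rfl⟩
    calc H.edges.card ≤ H.verts.powerset.card := by
          apply Finset.card_le_card
          intro e he
          exact Finset.mem_powerset.mpr (H.subset_verts e he)
      _ = 2 ^ n := by rw [Finset.card_powerset, hcard]
  have hexClPlus : exClPlus k n {F.layer k} = sSup Scl := rfl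
  have hexSC : exSC n F = sSup Ssc := rfl
  -- Upper bound
  have hub : exSC n F ≤ exClPlus k n {F.layer k} + ∑ r ∈ Finset.range k, n.choose r := by
    rw [hexSC]
    apply csSup_le'
    rintro m ⟨H, hHsc, hHcard, hHfree, rfl⟩
    have hsplit : (H.edges.filter (fun e => e.card < k)).card
        + (H.edges.filter (fun e => ¬ e.card < k)).card = H.edges.card :=
      Finset.card_filter_add_card_filter_not _
    set G := H.layer k with hG
    have hGuni : G.IsUniform k := fun e he => (Finset.mem_filter.mp he).2
    have hGcard : G.verts.card = n := hHcard
    have hGfree : ∀ H' ∈ ({F.layer k} : Set FinHypergraph), ¬ G.ContainsCopy H' := by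
      intro H' hH'
      rw [Set.mem_singleton_iff] at hH'
      subst hH'
      rintro ⟨f, hinj, hvert, hedge⟩
      apply hHfree
      refine ⟨f, hinj, hvert, ?_⟩
      intro e he
      obtain ⟨e', he', he'k, hsub⟩ := hmaxk e he
      have h1 : e'.image f ∈ G.edges := hedge e' (Finset.mem_filter.mpr ⟨he', he'k⟩)
      have h2 : e'.image f ∈ H.edges := (Finset.mem_filter.mp h1).1
      exact hHsc.2.2 (e'.image f) h2 (e.image f) (Finset.image_subset_image hsub)
    have hcliqueFin : {T : Finset ℕ | G.IsCliqueIn k T ∧ k ≤ T.card}.Finite := by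
      apply Set.Finite.subset (G.verts.powerset).finite_toSet
      rintro T ⟨⟨h1, _⟩, _⟩
      simpa using h1
    have hbig : (H.edges.filter (fun e => ¬ e.card < k)).card ≤ G.cliquePlusCount k := by
      rw [← Set.ncard_coe_finset]
      apply Set.ncard_le_ncard _ hcliqueFin
      intro T hT
      rw [Finset.mem_coe, Finset.mem_filter] at hT
      obtain ⟨hTe, hTk⟩ := hT
      refine ⟨⟨H.subset_verts T hTe, Or.inr (Or.inr ?_)⟩, by omega⟩
      intro S hS
      rw [Finset.mem_powersetCard] at hS
      exact Finset.mem_filter.mpr ⟨hHsc.2.2 T hTe S hS.1, hS.2⟩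
    have hsmall : (H.edges.filter (fun e => e.card < k)).card
        ≤ ∑ r ∈ Finset.range k, n.choose r := by
      rw [← hHcard, ← aux_small_count H.verts k]
      apply Finset.card_le_card
      intro e he
      rw [Finset.mem_filter] at he ⊢
      exact ⟨Finset.mem_powerset.mpr (H.subset_verts e he.1), he.2⟩
    have hmemCl : G.cliquePlusCount k ∈ Scl := ⟨G, hGuni, hGcard, hGfree, rfl⟩
    have hleCl : G.cliquePlusCount k ≤ exClPlus k n {F.layer k} := by
      rw [hexClPlus]
      exact le_csSup hbddCl hmemCl
    omega
  -- Lower bound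
  have hlb : exClPlus k n {F.layer k} + ∑ r ∈ Finset.range k, n.choose r ≤ exSC n F := by
    have hmemS : sSup Scl ∈ Scl := Nat.sSup_mem hneCl hbddCl
    obtain ⟨G, hGuni, hGcard, hGfree, hGc⟩ := hmemS
    set H := cliqueComplex G k with hH
    have hedge_mem : ∀ T : Finset ℕ,
        T ∈ H.edges ↔ T ⊆ G.verts ∧ (T.card < k ∨ G.IsCliqueIn k T) := by
      intro T
      rw [hH]
      show T ∈ Finset.filter _ _ ↔ _
      rw [Finset.mem_filter, Finset.mem_powerset]
    have hHverts : H.verts = G.verts := rfl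
    have hHsc : IsSimplicialComplex H := by
      refine ⟨?_, ?_, ?_⟩
      · rw [hedge_mem]
        exact ⟨Finset.empty_subset _, Or.inl (by simp; omega)⟩
      · intro v hv
        rw [hedge_mem]
        refine ⟨Finset.singleton_subset_iff.mpr hv, Or.inl (by simp; omega)⟩
      · intro e he e' he'
        rw [hedge_mem] at he ⊢
        refine ⟨he'.trans he.1, ?_⟩
        by_cases hcard : e'.card < k
        · exact Or.inl hcard
        · push_neg at hcard
          have hek : k ≤ e.card := le_trans hcard (Finset.card_le_card he')
          rcases he.2 with h | h
          · omega
          · right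
            rw [aux_clique_iff G hGuni hk hek] at h
            rw [aux_clique_iff G hGuni hk hcard]
            refine ⟨he'.trans h.1, fun S hS => ?_⟩
            rw [Finset.mem_powersetCard] at hS
            exact h.2 S (Finset.mem_powersetCard.mpr ⟨hS.1.trans he', hS.2⟩)
    have hHcard : H.verts.card = n := by rw [hHverts, hGcard]
    have hHfree : ¬ H.ContainsCopy F := by
      rintro ⟨f, hinj, hvert, hedge⟩
      apply hGfree (F.layer k) rfl
      refine ⟨f, hinj, hvert, ?_⟩
      intro e he
      rw [FinHypergraph.layer] at he
      rw [Finset.mem_filter] at he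
      have himg : e.image f ∈ H.edges := hedge e he.1
      have hcardimg : (e.image f).card = k := by
        rw [Finset.card_image_of_injOn (hinj.mono ?_), he.2]
        exact_mod_cast Finset.coe_subset.mpr (F.subset_verts e he.1)
      rw [hedge_mem] at himg
      rcases himg.2 with h | h
      · omega
      · have hcl := (aux_clique_iff G hGuni hk (le_of_eq hcardimg.symm)).mp h
        exact hcl.2 (e.image f) (Finset.mem_powersetCard.mpr ⟨subset_rfl, hcardimg⟩)
    have hcount : H.edges.card
        = G.cliquePlusCount k + ∑ r ∈ Finset.range k, n.choose r := by
      have hsplit : (H.edges.filter (fun e => e.card < k)).card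
          + (H.edges.filter (fun e => ¬ e.card < k)).card = H.edges.card :=
        Finset.card_filter_add_card_filter_not _
      have hsmall : H.edges.filter (fun e => e.card < k)
          = G.verts.powerset.filter (fun T => T.card < k) := by
        ext T
        rw [Finset.mem_filter, Finset.mem_filter, Finset.mem_powerset, hedge_mem]
        tauto
      have hbigset : {T : Finset ℕ | G.IsCliqueIn k T ∧ k ≤ T.card}
          = ↑(H.edges.filter (fun e => ¬ e.card < k)) := by
        ext T
        rw [Set.mem_setOf_eq, Finset.mem_coe, Finset.mem_filter, hedge_mem]
        constructor
        · rintro ⟨hcl, hle⟩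
          exact ⟨⟨hcl.1, Or.inr hcl⟩, by omega⟩
        · rintro ⟨⟨hv, h | h⟩, hle⟩
          · omega
          · exact ⟨h, by omega⟩
      have hbig : (H.edges.filter (fun e => ¬ e.card < k)).card = G.cliquePlusCount k := by
        rw [FinHypergraph.cliquePlusCount, hbigset, Set.ncard_coe_finset]
      have hsmallcard : (H.edges.filter (fun e => e.card < k)).card
          = ∑ r ∈ Finset.range k, n.choose r := by
        rw [hsmall, aux_small_count, hGcard]
      omega
    have hmemSc : H.edges.card ∈ Ssc := ⟨H, hHsc, hHcard, hHfree, rfl⟩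
    calc exClPlus k n {F.layer k} + ∑ r ∈ Finset.range k, n.choose r
        = H.edges.card := by rw [hcount, hGc, hexClPlus]
      _ ≤ sSup Ssc := le_csSup hbddSc hmemSc
      _ = exSC n F := hexSC.symm
  exact le_antisymm hub hlb
end

section
/- Let k, t be integers with k ≥ 2t - 2 ≥ 2. Let H be the (k-1)-dimensional simplicial complex 𝓓(TP^k_t) generated by the k-uniform tight path TP^k_t on vertex set {1,…,k+t-1}, and let F be the simplicial complex obtained from H by adding as a maximal edge (together with all its subsets) the (2t-2)-element set {1,…,t-1} ∪ {k+1,…,k+t-1} consisting of the first t-1 and last t-1 vertices of the tight path. Then ex(n,F)/ex(n,H) = Ω(n^{t-1}); more precisely, ex(n,H) = Θ(n^{k-1}) and ex(n,F) = Ω(n^{k+t-2}). -/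
open Filter Asymptotics

open Finset

/-- tails/degree -/
def degk (k : ℕ) (E : Finset (Finset ℕ)) (S : Finset ℕ) : ℕ :=
  (E.filter fun e => S ⊆ e ∧ e.card = k).card

def HasTP (k t : ℕ) (E : Finset (Finset ℕ)) : Prop :=
  ∃ v : ℕ → ℕ, Set.InjOn v ↑(Finset.range (k+t-1)) ∧
    ∀ i < t, (Finset.Icc i (i+k-1)).image v ∈ E

lemma hasTP_mono {k t : ℕ} {E E' : Finset (Finset ℕ)} (h : E' ⊆ E) :
    HasTP k t E' → HasTP k t E := by
  rintro ⟨v, h1, h2⟩; exact ⟨v, h1, fun i hi => h (h2 i hi)⟩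

lemma greedy (k t : ℕ) (hk : 2 ≤ k) (ht : 2 ≤ t) (E : Finset (Finset ℕ))
    (hclosed : ∀ e ∈ E, ∀ f ⊆ e, f.card = k → f ∈ E)
    (hcard : ∀ e ∈ E, k ≤ e.card)
    (hne : E.Nonempty)
    (hdeg : ∀ S : Finset ℕ, S.card = k-1 → (∃ e ∈ E, S ⊆ e ∧ e.card = k) →
      k + t ≤ degk k E S) :
    HasTP k t E := by
  have main : ∀ j, j ≤ t - 1 → ∃ v : ℕ → ℕ, Set.InjOn v ↑(Finset.range (k+j)) ∧
      ∀ i ≤ j, (Finset.Icc i (i+k-1)).image v ∈ E := by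
    intro j
    induction j with
    | zero =>
      intro _
      obtain ⟨e, he⟩ := hne
      obtain ⟨f, hfe, hfcard⟩ := Finset.exists_subset_card_eq (hcard e he)
      have hfE : f ∈ E := hclosed e he f hfe hfcard
      set emb := f.orderEmbOfFin hfcard with hemb
      refine ⟨fun x => if h : x < k then emb ⟨x, h⟩ else 0, ?_, ?_⟩
      · intro x hx y hy hxy
        simp only [Finset.coe_range, Set.mem_Iio] at hx hy
        have hx' : x < k := by omega
        have hy' : y < k := by omega
        simp only [dif_pos hx', dif_pos hy'] at hxy
        have := emb.injective hxy
        exact congrArg Fin.val this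
      · intro i hi
        have hi0 : i = 0 := by omega
        subst hi0
        have hIcc : Finset.Icc 0 (0+k-1) = Finset.range k := by
          ext x; simp [Finset.mem_Icc, Finset.mem_range]; omega
        rw [hIcc]
        have himg : (Finset.range k).image (fun x => if h : x < k then emb ⟨x, h⟩ else 0) = f := by
          ext y
          simp only [Finset.mem_image, Finset.mem_range]
          constructor
          · rintro ⟨x, hx, rfl⟩
            simp only [dif_pos hx]
            exact Finset.orderEmbOfFin_mem f hfcard _
          · intro hy
            have : y ∈ Set.range emb := by
              rw [Finset.range_orderEmbOfFin]; exact hy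
            obtain ⟨x, hx⟩ := this
            exact ⟨x.1, x.2, by simp [dif_pos x.2, hx]⟩
        rw [himg]; exact hfE
    | succ j ih =>
      intro hj
      obtain ⟨v, hinj, hwin⟩ := ih (by omega)
      -- last k-1 vertices
      set S : Finset ℕ := (Finset.Icc (j+1) (j+k-1)).image v with hS
      have hsub : Finset.Icc (j+1) (j+k-1) ⊆ Finset.range (k+j) := by
        intro x hx; simp only [Finset.mem_Icc] at hx; simp only [Finset.mem_range]; omega
      have hScard : S.card = k - 1 := by
        rw [hS, Finset.card_image_of_injOn (hinj.mono (by exact_mod_cast hsub)), Nat.card_Icc]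
        omega
      have hwj := hwin j le_rfl
      have hwjcard : ((Finset.Icc j (j+k-1)).image v).card = k := by
        have hsub' : Finset.Icc j (j+k-1) ⊆ Finset.range (k+j) := by
          intro x hx; simp only [Finset.mem_Icc] at hx; simp only [Finset.mem_range]; omega
        rw [Finset.card_image_of_injOn (hinj.mono (by exact_mod_cast hsub')), Nat.card_Icc]
        omega
      have hSsubw : S ⊆ (Finset.Icc j (j+k-1)).image v := by
        apply Finset.image_subset_image
        intro x hx; simp only [Finset.mem_Icc] at hx ⊢; omega
      have hdegS : k + t ≤ degk k E S :=
        hdeg S hScard ⟨_, hwj, hSsubw, hwjcard⟩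
      -- find a fresh extension
      set U : Finset ℕ := (Finset.range (k+j)).image v with hU
      have hUcard : U.card ≤ k + j := by
        calc U.card ≤ (Finset.range (k+j)).card := Finset.card_image_le
        _ = k + j := Finset.card_range _
      set A : Finset (Finset ℕ) := E.filter (fun e => S ⊆ e ∧ e.card = k) with hA
      have hex : ∃ e ∈ A, ∃ w ∈ e \ S, w ∉ U := by
        by_contra hcon
        push_neg at hcon
        -- then A.image (· \ S) ⊆ U.image ({·})
        have hinj2 : Set.InjOn (fun e => e \ S) ↑A := by
          intro e1 he1 e2 he2 h12
          simp only [Finset.mem_coe, hA, Finset.mem_filter] at he1 he2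
          have h12' : e1 \ S = e2 \ S := h12
          have : e1 \ S ∪ S = e2 \ S ∪ S := by rw [h12']
          rwa [Finset.sdiff_union_of_subset he1.2.1, Finset.sdiff_union_of_subset he2.2.1] at this
        have hmap : ∀ e ∈ A, (e \ S) ∈ U.image (fun w => ({w} : Finset ℕ)) := by
          intro e heA
          have heA' := heA
          simp only [hA, Finset.mem_filter] at heA'
          have h1 : (e \ S).card = 1 := by
            rw [Finset.card_sdiff_of_subset heA'.2.1, heA'.2.2, hScard]; omega
          obtain ⟨w, hw⟩ := Finset.card_eq_one.mp h1
          have hwe : w ∈ e \ S := by rw [hw]; exact Finset.mem_singleton_self w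
          have hwU : w ∈ U := hcon e heA w hwe
          rw [hw]
          exact Finset.mem_image_of_mem _ hwU
        have hcard2 : A.card ≤ U.card := by
          calc A.card ≤ (U.image (fun w => ({w} : Finset ℕ))).card :=
                Finset.card_le_card_of_injOn _ hmap hinj2
          _ ≤ U.card := Finset.card_image_le
        have : degk k E S = A.card := rfl
        omega
      obtain ⟨e, heA, w, hwe, hwU⟩ := hex
      simp only [hA, Finset.mem_filter] at heA
      obtain ⟨heE, hSe, hecard⟩ := heA
      have hwS : w ∉ S := (Finset.mem_sdiff.mp hwe).2
      have hwine : w ∈ e := (Finset.mem_sdiff.mp hwe).1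
      have heeq : e = insert w S := by
        refine (Finset.eq_of_subset_of_card_le ?_ ?_).symm
        · intro x hx
          rcases Finset.mem_insert.mp hx with rfl | hx'
          · exact hwine
          · exact hSe hx'
        · rw [Finset.card_insert_of_notMem hwS, hScard, hecard]; omega
      set v' : ℕ → ℕ := Function.update v (k+j) w with hv'
      have hagree : ∀ x, x < k + j → v' x = v x := by
        intro x hx
        rw [hv', Function.update_of_ne (by omega)]
      refine ⟨v', ?_, ?_⟩
      · intro x hx y hy hxy
        simp only [Finset.coe_range, Set.mem_Iio] at hx hy
        by_cases hxk : x < k + j <;> by_cases hyk : y < k + j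
        · rw [hagree x hxk, hagree y hyk] at hxy
          exact hinj (by simp [hxk]) (by simp [hyk]) hxy
        · exfalso
          have hy' : y = k + j := by omega
          rw [hagree x hxk, hy', hv', Function.update_self] at hxy
          apply hwU
          rw [hU]
          exact hxy ▸ Finset.mem_image_of_mem v (Finset.mem_range.mpr hxk)
        · exfalso
          have hx' : x = k + j := by omega
          rw [hagree y hyk, hx', hv', Function.update_self] at hxy
          apply hwU
          rw [hU]
          exact hxy ▸ Finset.mem_image_of_mem v (Finset.mem_range.mpr hyk)
        · omega
      · intro i hi
        rcases Nat.lt_or_ge i (j+1) with hij | hij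
        · have : (Finset.Icc i (i+k-1)).image v' = (Finset.Icc i (i+k-1)).image v := by
            apply Finset.image_congr
            intro x hx
            simp only [Finset.mem_coe, Finset.mem_Icc] at hx
            exact hagree x (by omega)
          rw [this]
          exact hwin i (by omega)
        · have hieq : i = j + 1 := by omega
          subst hieq
          have hIcc : Finset.Icc (j+1) (j+1+k-1) = insert (k+j) (Finset.Icc (j+1) (j+k-1)) := by
            ext x; simp only [Finset.mem_Icc, Finset.mem_insert]; omega
          rw [hIcc, Finset.image_insert]
          have h1 : v' (k+j) = w := by rw [hv', Function.update_self]
          have h2 : (Finset.Icc (j+1) (j+k-1)).image v' = S := by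
            rw [hS]
            apply Finset.image_congr
            intro x hx
            simp only [Finset.mem_coe, Finset.mem_Icc] at hx
            exact hagree x (by omega)
          rw [h1, h2, ← heeq]
          exact heE
  obtain ⟨v, hinj, hwin⟩ := main (t-1) le_rfl
  refine ⟨v, ?_, ?_⟩
  · have : k + (t-1) = k + t - 1 := by omega
    rwa [this] at hinj
  · intro i hi; exact hwin i (by omega)

/-- the set of (k-1)-subsets of edges -/
def sset (k : ℕ) (E : Finset (Finset ℕ)) : Finset (Finset ℕ) :=
  E.biUnion (fun e => e.powersetCard (k-1))

lemma core (k t : ℕ) (hk : 2 ≤ k) (ht : 2 ≤ t) :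
    ∀ N (E : Finset (Finset ℕ)), E.card ≤ N →
    (∀ e ∈ E, ∀ f ⊆ e, f.card = k → f ∈ E) →
    (∀ e ∈ E, k ≤ e.card) →
    ¬ HasTP k t E →
    E.card ≤ 2 ^ (k+t) * (sset k E).card := by
  intro N
  induction N with
  | zero => intro E hE _ _ _; omega
  | succ N ihN =>
    intro E hEN hclosed hcard hfree
    rcases Finset.eq_empty_or_nonempty E with rfl | hne
    · simp
    by_cases hbad : ∃ S ∈ sset k E, degk k E S < k + t
    · obtain ⟨S, hSs, hSd⟩ := hbad
      -- S is a (k-1)-subset of some edge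
      have hSmem := Finset.mem_biUnion.mp hSs
      obtain ⟨e0, he0E, hSe0⟩ := hSmem
      rw [Finset.mem_powersetCard] at hSe0
      obtain ⟨hSe0sub, hScard⟩ := hSe0
      classical
      set E' : Finset (Finset ℕ) := E.filter (fun e => ¬ S ⊆ e) with hE'
      set R : Finset (Finset ℕ) := E.filter (fun e => S ⊆ e) with hR
      have hsplit : E'.card + R.card = E.card := by
        rw [hE', hR]
        rw [add_comm]
        exact Finset.card_filter_add_card_filter_not _
      -- R is nonempty since e0 ∈ R
      have he0R : e0 ∈ R := by rw [hR, Finset.mem_filter]; exact ⟨he0E, hSe0sub⟩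
      have hRpos : 1 ≤ R.card := Finset.card_pos.mpr ⟨e0, he0R⟩
      -- bound R.card ≤ 2^(k+t-1)
      set K : Finset (Finset ℕ) := E.filter (fun e => S ⊆ e ∧ e.card = k) with hK
      set NS : Finset ℕ := K.biUnion (fun e => e \ S) with hNS
      have hNScard : NS.card ≤ degk k E S := by
        calc NS.card ≤ ∑ e ∈ K, (e \ S).card := Finset.card_biUnion_le
        _ = ∑ e ∈ K, 1 := by
            apply Finset.sum_congr rfl
            intro e heK
            rw [hK, Finset.mem_filter] at heK
            rw [Finset.card_sdiff_of_subset heK.2.1, heK.2.2, hScard]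
            omega
        _ = K.card := by simp
        _ = degk k E S := rfl
      have hRbound : R.card ≤ 2 ^ (k + t - 1) := by
        have hmap : ∀ e ∈ R, (e \ S) ∈ NS.powerset := by
          intro e heR
          rw [hR, Finset.mem_filter] at heR
          rw [Finset.mem_powerset]
          intro w hw
          rw [Finset.mem_sdiff] at hw
          have hins : insert w S ⊆ e := by
            intro x hx
            rcases Finset.mem_insert.mp hx with rfl | hx'
            · exact hw.1
            · exact heR.2 hx'
          have hinscard : (insert w S).card = k := by
            rw [Finset.card_insert_of_notMem hw.2, hScard]; omega
          have hinsE : insert w S ∈ E := hclosed e heR.1 _ hins hinscard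
          rw [hNS]
          apply Finset.mem_biUnion.mpr
          refine ⟨insert w S, ?_, ?_⟩
          · rw [hK, Finset.mem_filter]
            exact ⟨hinsE, Finset.subset_insert _ _, hinscard⟩
          · rw [Finset.mem_sdiff]
            exact ⟨Finset.mem_insert_self _ _, hw.2⟩
        have hinj2 : Set.InjOn (fun e => e \ S) ↑R := by
          intro e1 he1 e2 he2 h12
          simp only [Finset.mem_coe, hR, Finset.mem_filter] at he1 he2
          have h12' : e1 \ S = e2 \ S := h12
          have : e1 \ S ∪ S = e2 \ S ∪ S := by rw [h12']
          rwa [Finset.sdiff_union_of_subset he1.2, Finset.sdiff_union_of_subset he2.2] at this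
        calc R.card ≤ NS.powerset.card := Finset.card_le_card_of_injOn _ hmap hinj2
        _ = 2 ^ NS.card := Finset.card_powerset _
        _ ≤ 2 ^ (k + t - 1) := Nat.pow_le_pow_right (by norm_num) (by omega)
      -- E' properties
      have hE'sub : E' ⊆ E := Finset.filter_subset _ _
      have hE'card : E'.card < E.card := by omega
      have hE'closed : ∀ e ∈ E', ∀ f ⊆ e, f.card = k → f ∈ E' := by
        intro e heE' f hfe hfcard
        rw [hE', Finset.mem_filter] at heE' ⊢
        refine ⟨hclosed e heE'.1 f hfe hfcard, ?_⟩
        intro hSf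
        exact heE'.2 (hSf.trans hfe)
      have hE'free : ¬ HasTP k t E' := fun h => hfree (hasTP_mono hE'sub h)
      have hsset : sset k E' ⊆ (sset k E).erase S := by
        intro S' hS'
        obtain ⟨e, heE', hS'e⟩ := Finset.mem_biUnion.mp hS'
        rw [hE', Finset.mem_filter] at heE'
        rw [Finset.mem_erase]
        constructor
        · rintro rfl
          exact heE'.2 (Finset.mem_powersetCard.mp hS'e).1
        · exact Finset.mem_biUnion.mpr ⟨e, heE'.1, hS'e⟩
      have hssetpos : 1 ≤ (sset k E).card := Finset.card_pos.mpr ⟨S, hSs⟩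
      have hE'bound := ihN E' (by omega) hE'closed
        (fun e he => hcard e (hE'sub he)) hE'free
      have hsscard : (sset k E').card ≤ (sset k E).card - 1 := by
        calc (sset k E').card ≤ ((sset k E).erase S).card := Finset.card_le_card hsset
        _ = (sset k E).card - 1 := Finset.card_erase_of_mem hSs
      calc E.card = E'.card + R.card := hsplit.symm
      _ ≤ 2 ^ (k+t) * (sset k E').card + 2 ^ (k+t-1) := by omega
      _ ≤ 2 ^ (k+t) * ((sset k E).card - 1) + 2 ^ (k+t) := by
          have h1 : (2:ℕ) ^ (k+t-1) ≤ 2 ^ (k+t) := Nat.pow_le_pow_right (by norm_num) (by omega)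
          have h2 : 2 ^ (k+t) * (sset k E').card ≤ 2 ^ (k+t) * ((sset k E).card - 1) :=
            Nat.mul_le_mul_left _ hsscard
          omega
      _ = 2 ^ (k+t) * ((sset k E).card - 1 + 1) := by ring
      _ = 2 ^ (k+t) * (sset k E).card := by rw [Nat.sub_add_cancel hssetpos]
    · -- no bad S: greedy gives a tight path, contradiction
      exfalso
      apply hfree
      apply greedy k t hk ht E hclosed hcard hne
      intro S hScard ⟨e, heE, hSe, hecard⟩
      by_contra hlt
      push_neg at hbad hlt
      have hSs : S ∈ sset k E := by
        apply Finset.mem_biUnion.mpr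
        exact ⟨e, heE, Finset.mem_powersetCard.mpr ⟨hSe, hScard⟩⟩
      exact absurd (hbad S hSs) (not_le.mpr hlt)



lemma tp_window (k t i : ℕ) (hk : 1 ≤ k) (hi : i < t) :
    Finset.Icc i (i+k-1) ∈ (tightPathHG k t).edges := by
  simp only [tightPathHG, Finset.mem_image, Finset.mem_range]
  refine ⟨i, hi, ?_⟩
  ext x
  simp only [Finset.mem_image, Finset.mem_range, Finset.mem_Icc]
  constructor
  · rintro ⟨j, hj, rfl⟩; omega
  · intro h; exact ⟨x - i, by omega, by omega⟩

lemma tp_edges_subset (k t : ℕ) (hk : 1 ≤ k) : ∀ a ∈ (tightPathHG k t).edges,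
    ∃ i < t, a = Finset.Icc i (i+k-1) := by
  intro a ha
  simp only [tightPathHG, Finset.mem_image, Finset.mem_range] at ha
  obtain ⟨i, hi, rfl⟩ := ha
  refine ⟨i, hi, ?_⟩
  ext x
  simp only [Finset.mem_image, Finset.mem_range, Finset.mem_Icc]
  constructor
  · rintro ⟨j, hj, rfl⟩; omega
  · intro h; exact ⟨x - i, by omega, by omega⟩

lemma tp_sup (k t : ℕ) (hk : 2 ≤ k) (ht : 2 ≤ t) :
    (tightPathHG k t).edges.sup id = Finset.range (k+t-1) := by
  ext x
  rw [Finset.mem_sup]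
  constructor
  · rintro ⟨a, ha, hx⟩
    obtain ⟨i, hi, rfl⟩ := tp_edges_subset k t (by omega) a ha
    simp only [id, Finset.mem_Icc] at hx
    simp only [Finset.mem_range]; omega
  · intro hx
    simp only [Finset.mem_range] at hx
    refine ⟨Finset.Icc (min x (t-1)) (min x (t-1) + k - 1), tp_window k t _ (by omega) (by omega), ?_⟩
    simp only [id, Finset.mem_Icc]; omega

lemma mem_genComplex {E : Finset (Finset ℕ)} {e : Finset ℕ} :
    e ∈ (genComplex E).edges ↔ e = ∅ ∨ ∃ a ∈ E, e ⊆ a := by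
  simp [genComplex]

lemma copy_of_path (k t : ℕ) (hk : 2 ≤ k) (ht : 2 ≤ t) (C : FinHypergraph)
    (hC : IsSimplicialComplex C)
    (h : HasTP k t (C.edges.filter fun e => k ≤ e.card)) :
    C.ContainsCopy (genComplex (tightPathHG k t).edges) := by
  classical
  obtain ⟨v, hinj, hwin⟩ := h
  have hverts : (genComplex (tightPathHG k t).edges).verts = Finset.range (k+t-1) :=
    tp_sup k t hk ht
  have hwin' : ∀ i < t, (Finset.Icc i (i+k-1)).image v ∈ C.edges := fun i hi =>
    (Finset.mem_filter.mp (hwin i hi)).1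
  refine ⟨v, by rw [hverts]; exact hinj, ?_, ?_⟩
  · intro x hx
    rw [hverts, Finset.mem_range] at hx
    have hx' : x ∈ Finset.Icc (min x (t-1)) (min x (t-1)+k-1) := by
      simp only [Finset.mem_Icc]; omega
    have hmem : v x ∈ (Finset.Icc (min x (t-1)) (min x (t-1)+k-1)).image v :=
      Finset.mem_image_of_mem v hx'
    exact (C.subset_verts _ (hwin' (min x (t-1)) (by omega))) hmem
  · intro e he
    rw [mem_genComplex] at he
    rcases he with rfl | ⟨a, haE, hea⟩
    · simpa using hC.1
    · obtain ⟨i, hi, rfl⟩ := tp_edges_subset k t (by omega) a haE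
      exact hC.2.2 _ (hwin' i hi) _ (Finset.image_subset_image hea)

lemma free_of_small (k t : ℕ) (hk : 2 ≤ k) (ht : 2 ≤ t) (G : FinHypergraph)
    (hsmall : ∀ e ∈ G.edges, e.card ≤ k - 1) :
    ¬ G.ContainsCopy (genComplex (tightPathHG k t).edges) := by
  rintro ⟨f, hinj, hv, he⟩
  have hverts : (genComplex (tightPathHG k t).edges).verts = Finset.range (k+t-1) :=
    tp_sup k t hk ht
  have hw0 : Finset.Icc 0 (0+k-1) ∈ (genComplex (tightPathHG k t).edges).edges := by
    rw [mem_genComplex]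
    exact Or.inr ⟨_, tp_window k t 0 (by omega) (by omega), le_refl _⟩
  have himg := he _ hw0
  have hcard : ((Finset.Icc 0 (0+k-1)).image f).card = k := by
    rw [Finset.card_image_of_injOn, Nat.card_Icc]
    · omega
    · apply hinj.mono
      rw [hverts]
      intro x hx
      simp only [Finset.coe_Icc, Set.mem_Icc] at hx
      simp only [Finset.coe_range, Set.mem_Iio]
      omega
  have := hsmall _ himg
  omega

lemma complex_card_le (k t n : ℕ) (hk : 2 ≤ k) (ht : 2 ≤ t) (C : FinHypergraph)
    (hC : IsSimplicialComplex C) (hn : C.verts.card = n)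
    (hfree : ¬ C.ContainsCopy (genComplex (tightPathHG k t).edges)) :
    C.edges.card ≤ ∑ r ∈ Finset.range k, n.choose r + 2^(k+t) * n.choose (k-1) := by
  classical
  have hsplit := Finset.card_filter_add_card_filter_not (s := C.edges)
    (p := fun e => k ≤ e.card)
  set big := C.edges.filter (fun e => k ≤ e.card) with hbig
  set small := C.edges.filter (fun e => ¬ k ≤ e.card) with hsmall2
  have hsb : small.card ≤ ∑ r ∈ Finset.range k, n.choose r := by
    have hsub : small ⊆ (Finset.range k).biUnion (fun r => C.verts.powersetCard r) := by
      intro e hehm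
      rw [hsmall2, Finset.mem_filter] at hehm
      apply Finset.mem_biUnion.mpr
      exact ⟨e.card, Finset.mem_range.mpr (by omega),
        Finset.mem_powersetCard.mpr ⟨C.subset_verts e hehm.1, rfl⟩⟩
    calc small.card ≤ _ := Finset.card_le_card hsub
    _ ≤ ∑ r ∈ Finset.range k, (C.verts.powersetCard r).card := Finset.card_biUnion_le
    _ = ∑ r ∈ Finset.range k, n.choose r := by
        apply Finset.sum_congr rfl; intro r _; rw [Finset.card_powersetCard, hn]
  have hbb : big.card ≤ 2^(k+t) * n.choose (k-1) := by
    have hclosed : ∀ e ∈ big, ∀ f ⊆ e, f.card = k → f ∈ big := by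
      intro e he f hfe hfcard
      rw [hbig, Finset.mem_filter] at he ⊢
      exact ⟨hC.2.2 _ he.1 _ hfe, by omega⟩
    have hcard' : ∀ e ∈ big, k ≤ e.card := fun e he => (Finset.mem_filter.mp he).2
    have hfree' : ¬ HasTP k t big := fun h => hfree (copy_of_path k t hk ht C hC h)
    have hbound := core k t hk ht big.card big le_rfl hclosed hcard' hfree'
    have hss : sset k big ⊆ C.verts.powersetCard (k-1) := by
      intro S hS
      obtain ⟨e, heb, hSe⟩ := Finset.mem_biUnion.mp hS
      rw [Finset.mem_powersetCard] at hSe ⊢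
      exact ⟨hSe.1.trans (C.subset_verts e (Finset.mem_filter.mp heb).1), hSe.2⟩
    calc big.card ≤ 2^(k+t) * (sset k big).card := hbound
    _ ≤ 2^(k+t) * (C.verts.powersetCard (k-1)).card :=
        Nat.mul_le_mul_left _ (Finset.card_le_card hss)
    _ = 2^(k+t) * n.choose (k-1) := by rw [Finset.card_powersetCard, hn]
  omega



/-- the rainbow (partite) complex -/
def rainbowC (p n : ℕ) : FinHypergraph where
  verts := Finset.range n
  edges := (Finset.range n).powerset.filter
    (fun S => ∀ a ∈ S, ∀ b ∈ S, a % p = b % p → a = b)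
  subset_verts := fun e he => Finset.mem_powerset.mp (Finset.mem_filter.mp he).1

lemma rainbow_mem {p n : ℕ} {S : Finset ℕ} :
    S ∈ (rainbowC p n).edges ↔ S ⊆ Finset.range n ∧
      ∀ a ∈ S, ∀ b ∈ S, a % p = b % p → a = b := by
  simp [rainbowC, Finset.mem_filter, Finset.mem_powerset]

lemma rainbow_simplicial (p n : ℕ) : IsSimplicialComplex (rainbowC p n) := by
  refine ⟨?_, ?_, ?_⟩
  · rw [rainbow_mem]; simp
  · intro v hv
    rw [rainbow_mem]
    refine ⟨Finset.singleton_subset_iff.mpr hv, ?_⟩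
    intro a ha b hb _
    rw [Finset.mem_singleton] at ha hb
    rw [ha, hb]
  · intro e he e' he'
    rw [rainbow_mem] at he ⊢
    exact ⟨he'.trans he.1, fun a ha b hb => he.2 a (he' ha) b (he' hb)⟩

lemma rainbow_verts_card (p n : ℕ) : (rainbowC p n).verts.card = n := Finset.card_range n

lemma rainbow_edge_card {p n : ℕ} (hp : 1 ≤ p) : ∀ e ∈ (rainbowC p n).edges, e.card ≤ p := by
  intro e he
  rw [rainbow_mem] at he
  have hinj : Set.InjOn (· % p) ↑e := fun a ha b hb hab => he.2 a ha b hb hab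
  calc e.card = (e.image (· % p)).card := (Finset.card_image_of_injOn hinj).symm
  _ ≤ (Finset.range p).card := Finset.card_le_card (by
      intro x hx
      obtain ⟨a, _, rfl⟩ := Finset.mem_image.mp hx
      exact Finset.mem_range.mpr (Nat.mod_lt a hp))
  _ = p := Finset.card_range p

lemma rainbow_count (p n : ℕ) (hp : 1 ≤ p) :
    (n / p) ^ p ≤ (rainbowC p n).edges.card := by
  classical
  set m := n / p with hm'
  rcases Nat.eq_zero_or_pos m with h0 | hmpos
  · rw [h0, zero_pow (by omega : p ≠ 0)]; exact Nat.zero_le _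
  have hmod : ∀ (x : Fin p → Fin m) (r : Fin p), (p * (x r) + (r:ℕ)) % p = r := by
    intro x r
    rw [Nat.mul_add_mod]
    exact Nat.mod_eq_of_lt r.2
  have hlt : ∀ (x : Fin p → Fin m) (r : Fin p), p * (x r) + (r:ℕ) < n := by
    intro x r
    have h1 : (x r : ℕ) < m := (x r).2
    have h2 : (r : ℕ) < p := r.2
    have h3 : p * m ≤ n := by
      rw [hm', mul_comm]
      exact Nat.div_mul_le_self n p
    calc p * (x r) + (r:ℕ) < p * (x r) + p := by omega
    _ = p * ((x r) + 1) := by ring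
    _ ≤ p * m := Nat.mul_le_mul_left p (by omega)
    _ ≤ n := h3
  have hmem : ∀ x : Fin p → Fin m,
      (Finset.univ.image (fun r : Fin p => p * (x r) + (r:ℕ))) ∈ (rainbowC p n).edges := by
    intro x
    rw [rainbow_mem]
    constructor
    · intro y hy
      obtain ⟨r, _, rfl⟩ := Finset.mem_image.mp hy
      exact Finset.mem_range.mpr (hlt x r)
    · intro a ha b hb hab
      obtain ⟨r, _, rfl⟩ := Finset.mem_image.mp ha
      obtain ⟨r', _, rfl⟩ := Finset.mem_image.mp hb
      rw [hmod x r, hmod x r'] at hab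
      have : r = r' := Fin.ext hab
      rw [this]
  have hinj : Set.InjOn (fun x : Fin p → Fin m =>
      Finset.univ.image (fun r : Fin p => p * (x r) + (r:ℕ)))
      ↑(Finset.univ : Finset (Fin p → Fin m)) := by
    intro x _ y _ hxy
    simp only at hxy
    funext r
    have hx : p * (x r) + (r:ℕ) ∈ Finset.univ.image (fun r : Fin p => p * (y r) + (r:ℕ)) := by
      rw [← hxy]
      exact Finset.mem_image_of_mem _ (Finset.mem_univ r)
    obtain ⟨r', _, hr'⟩ := Finset.mem_image.mp hx
    have hmods : (r' : ℕ) = (r : ℕ) := by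
      have h := congrArg (· % p) hr'
      rw [hmod y r', hmod x r] at h
      exact h
    have hrr : r' = r := Fin.ext hmods
    rw [hrr] at hr'
    have hpy : p * (y r : ℕ) = p * (x r : ℕ) := by omega
    exact (Fin.ext (Nat.eq_of_mul_eq_mul_left (by omega) hpy)).symm
  calc m ^ p = (Finset.univ : Finset (Fin p → Fin m)).card := by
        rw [Finset.card_univ, Fintype.card_fun]
        simp
  _ ≤ (rainbowC p n).edges.card :=
      Finset.card_le_card_of_injOn _ (fun x _ => hmem x) hinj



lemma aug_verts (k t : ℕ) (hk : 2 ≤ k) (ht : 2 ≤ t) :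
    (genComplex (insert (Finset.range (t-1) ∪ Finset.Icc k (k+t-2))
      (tightPathHG k t).edges)).verts = Finset.range (k+t-1) := by
  change (insert (Finset.range (t-1) ∪ Finset.Icc k (k+t-2))
    (tightPathHG k t).edges).sup id = _
  rw [Finset.sup_insert, tp_sup k t hk ht]
  rw [Finset.sup_eq_union]
  apply Finset.union_eq_right.mpr
  intro x hx
  simp only [id, Finset.mem_union, Finset.mem_range, Finset.mem_Icc] at hx
  simp only [Finset.mem_range]
  omega

lemma aug_pair (k t : ℕ) (hk : 2 ≤ k) (ht : 2 ≤ t) {u v : ℕ}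
    (huv : u < v) (hv : v < k+t-1) :
    ({u, v} : Finset ℕ) ∈ (genComplex (insert (Finset.range (t-1) ∪ Finset.Icc k (k+t-2))
      (tightPathHG k t).edges)).edges := by
  rw [mem_genComplex]
  right
  rcases Nat.lt_or_ge v (u+k) with h | h
  · refine ⟨Finset.Icc (min u (t-1)) (min u (t-1)+k-1),
      Finset.mem_insert_of_mem (tp_window k t _ (by omega) (by omega)), ?_⟩
    intro x hx
    simp only [Finset.mem_insert, Finset.mem_singleton] at hx
    simp only [Finset.mem_Icc]
    rcases hx with rfl | rfl <;> omega
  · refine ⟨_, Finset.mem_insert_self _ _, ?_⟩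
    intro x hx
    simp only [Finset.mem_insert, Finset.mem_singleton] at hx
    simp only [Finset.mem_union, Finset.mem_range, Finset.mem_Icc]
    rcases hx with rfl | rfl
    · left; omega
    · right; omega

lemma rainbow_F_free (k t n : ℕ) (hk : 2 ≤ k) (ht : 2 ≤ t) :
    ¬ (rainbowC (k+t-2) n).ContainsCopy
      (genComplex (insert (Finset.range (t-1) ∪ Finset.Icc k (k+t-2))
        (tightPathHG k t).edges)) := by
  rintro ⟨f, hinj, hv, he⟩
  rw [aug_verts k t hk ht] at hinj hv
  set p := k + t - 2 with hp
  have hppos : 1 ≤ p := by omega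
  have hpair : ∀ x y, x < y → y < k+t-1 → f x % p = f y % p → f x = f y := by
    intro x y hxy hy hmod
    have hmem := he _ (aug_pair k t hk ht hxy hy)
    have himg : ({x, y} : Finset ℕ).image f = {f x, f y} := by
      rw [Finset.image_insert, Finset.image_singleton]
    rw [himg, rainbow_mem] at hmem
    exact hmem.2 (f x) (Finset.mem_insert_self _ _) (f y)
      (Finset.mem_insert_of_mem (Finset.mem_singleton_self _)) hmod
  have hg : Set.InjOn (fun x => f x % p) ↑(Finset.range (k+t-1)) := by
    intro x hx y hy hxy
    simp only [Finset.coe_range, Set.mem_Iio] at hx hy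
    simp only at hxy
    rcases lt_trichotomy x y with hlt | heq | hgt
    · exact hinj (by simpa using hx) (by simpa using hy) (hpair x y hlt hy hxy)
    · exact heq
    · exact hinj (by simpa using hx) (by simpa using hy) (hpair y x hgt hx hxy.symm).symm
  have hcard : ((Finset.range (k+t-1)).image (fun x => f x % p)).card = k+t-1 := by
    rw [Finset.card_image_of_injOn hg, Finset.card_range]
  have hsub : (Finset.range (k+t-1)).image (fun x => f x % p) ⊆ Finset.range p := by
    intro y hy
    obtain ⟨x, _, rfl⟩ := Finset.mem_image.mp hy
    exact Finset.mem_range.mpr (Nat.mod_lt _ hppos)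
  have := Finset.card_le_card hsub
  rw [hcard, Finset.card_range] at this
  omega

lemma le_exSC {n : ℕ} {F G : FinHypergraph} (hG : IsSimplicialComplex G)
    (hGn : G.verts.card = n) (hfree : ¬ G.ContainsCopy F) :
    G.edges.card ≤ exSC n F := by
  apply le_csSup
  · refine ⟨2^n, ?_⟩
    rintro m ⟨H, _, hHn, _, rfl⟩
    calc H.edges.card ≤ H.verts.powerset.card :=
        Finset.card_le_card (fun e he => Finset.mem_powerset.mpr (H.subset_verts e he))
    _ = 2^n := by rw [Finset.card_powerset, hHn]
  · exact ⟨G, hG, hGn, hfree, rfl⟩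

lemma exSC_le {n : ℕ} {F : FinHypergraph} {B : ℕ}
    (hne : ∃ G, IsSimplicialComplex G ∧ G.verts.card = n ∧ ¬G.ContainsCopy F)
    (hub : ∀ G, IsSimplicialComplex G → G.verts.card = n → ¬G.ContainsCopy F →
      G.edges.card ≤ B) :
    exSC n F ≤ B := by
  apply csSup_le
  · obtain ⟨G, h1, h2, h3⟩ := hne
    exact ⟨G.edges.card, G, h1, h2, h3, rfl⟩
  · rintro m ⟨G, h1, h2, h3, rfl⟩
    exact hub G h1 h2 h3

lemma exH_lower (k t n : ℕ) (hk : 2 ≤ k) (ht : 2 ≤ t) :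
    (n / (k-1)) ^ (k-1) ≤ exSC n (genComplex (tightPathHG k t).edges) := by
  refine le_trans (rainbow_count (k-1) n (by omega))
    (le_exSC (rainbow_simplicial _ _) (rainbow_verts_card _ _) ?_)
  exact free_of_small k t hk ht _ (rainbow_edge_card (by omega))

lemma exH_upper (k t n : ℕ) (hk : 2 ≤ k) (ht : 2 ≤ t) :
    exSC n (genComplex (tightPathHG k t).edges) ≤
      ∑ r ∈ Finset.range k, n.choose r + 2^(k+t) * n.choose (k-1) := by
  apply exSC_le
  · exact ⟨rainbowC (k-1) n, rainbow_simplicial _ _, rainbow_verts_card _ _,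
      free_of_small k t hk ht _ (rainbow_edge_card (by omega))⟩
  · intro G h1 h2 h3; exact complex_card_le k t n hk ht G h1 h2 h3

lemma exF_lower (k t n : ℕ) (hk : 2 ≤ k) (ht : 2 ≤ t) :
    (n / (k+t-2)) ^ (k+t-2) ≤ exSC n (genComplex (insert
      (Finset.range (t-1) ∪ Finset.Icc k (k+t-2)) (tightPathHG k t).edges)) := by
  refine le_trans (rainbow_count (k+t-2) n (by omega))
    (le_exSC (rainbow_simplicial _ _) (rainbow_verts_card _ _) ?_)
  exact rainbow_F_free k t n hk ht

lemma nat_div_real (q n : ℕ) (hq : 1 ≤ q) (hn : 2*q ≤ n) :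
    ((n:ℝ) / (2*q)) ≤ ((n / q : ℕ) : ℝ) := by
  have hd := Nat.div_add_mod n q
  have hm : n % q < q := Nat.mod_lt n (by omega)
  have key : (n:ℕ) ≤ 2*(q*(n/q)) := by omega
  have key' : (n:ℝ) ≤ 2*q*((n/q : ℕ) : ℝ) := by
    have := (Nat.cast_le (α := ℝ)).mpr key
    push_cast at this
    linarith
  rw [div_le_iff₀ (by positivity)]
  linarith

lemma choose_le_pow_aux (n r : ℕ) : n.choose r ≤ n ^ r :=
  le_trans (Nat.choose_le_descFactorial n r) (Nat.descFactorial_le_pow n r)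

theorem tight_path_plus_edge_jump (k t : ℕ) (ht : 2 ≤ t) (hkt : 2 * t - 2 ≤ k) :
    (∃ c C : ℝ, 0 < c ∧ 0 < C ∧ ∀ᶠ n : ℕ in Filter.atTop,
        c * (n : ℝ) ^ (k - 1) ≤ (exSC n (genComplex (tightPathHG k t).edges) : ℝ) ∧
          (exSC n (genComplex (tightPathHG k t).edges) : ℝ) ≤ C * (n : ℝ) ^ (k - 1)) ∧
      (∃ c : ℝ, 0 < c ∧ ∀ᶠ n : ℕ in Filter.atTop,
        c * (n : ℝ) ^ (k + t - 2) ≤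
          (exSC n (genComplex (insert
            (Finset.range (t - 1) ∪ Finset.Icc k (k + t - 2)) (tightPathHG k t).edges)) : ℝ)) ∧
      ∃ c : ℝ, 0 < c ∧ ∀ᶠ n : ℕ in Filter.atTop,
        c * (n : ℝ) ^ (t - 1) ≤
          (exSC n (genComplex (insert
              (Finset.range (t - 1) ∪ Finset.Icc k (k + t - 2)) (tightPathHG k t).edges)) : ℝ) /
            (exSC n (genComplex (tightPathHG k t).edges) : ℝ) := by
  have hk : 2 ≤ k := by omega
  set H := genComplex (tightPathHG k t).edges with hH
  set F := genComplex (insert (Finset.range (t - 1) ∪ Finset.Icc k (k + t - 2))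
    (tightPathHG k t).edges) with hF
  set q₁ : ℕ := k - 1 with hq₁
  set q₂ : ℕ := k + t - 2 with hq₂
  set c₁ : ℝ := (1/(2*(q₁:ℝ)))^q₁ with hc₁
  set c₂ : ℝ := (1/(2*(q₂:ℝ)))^q₂ with hc₂
  set C : ℝ := (k:ℝ) + 2^(k+t) with hC
  have hq₁pos : 1 ≤ q₁ := by omega
  have hq₂pos : 1 ≤ q₂ := by omega
  have hc₁pos : 0 < c₁ := by
    rw [hc₁]
    apply pow_pos
    have : (0:ℝ) < (q₁:ℝ) := by exact_mod_cast hq₁pos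
    positivity
  have hc₂pos : 0 < c₂ := by
    rw [hc₂]
    apply pow_pos
    have : (0:ℝ) < (q₂:ℝ) := by exact_mod_cast hq₂pos
    positivity
  have hCpos : 0 < C := by
    rw [hC]
    positivity
  -- generic lower bound via rainbow counting
  have lower_gen : ∀ (q : ℕ), 1 ≤ q → ∀ n : ℕ, 2*q ≤ n →
      (1/(2*(q:ℝ)))^q * (n:ℝ)^q ≤ (((n / q) ^ q : ℕ) : ℝ) := by
    intro q hq n hn
    have h3 : (n:ℝ)/(2*(q:ℝ)) ≤ ((n/q : ℕ):ℝ) := by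
      have := nat_div_real q n hq hn
      push_cast at this ⊢
      linarith
    have heq : (1/(2*(q:ℝ)))^q * (n:ℝ)^q = ((n:ℝ)/(2*(q:ℝ)))^q := by
      rw [← mul_pow]
      congr 1
      ring
    rw [heq]
    have h4 : ((n:ℝ)/(2*(q:ℝ)))^q ≤ ((n/q : ℕ):ℝ)^q := by
      apply pow_le_pow_left₀ _ h3
      have h5 : (0:ℝ) < (q:ℝ) := by exact_mod_cast hq
      positivity
    calc ((n:ℝ)/(2*(q:ℝ)))^q ≤ ((n/q : ℕ):ℝ)^q := h4
    _ = (((n / q) ^ q : ℕ) : ℝ) := by push_cast; ring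
  have lower1 : ∀ n : ℕ, 2*q₁ ≤ n → c₁ * (n:ℝ)^(k-1) ≤ (exSC n H : ℝ) := by
    intro n hn
    have h1 := exH_lower k t n hk ht
    calc c₁ * (n:ℝ)^(k-1) ≤ (((n / q₁) ^ q₁ : ℕ) : ℝ) := lower_gen q₁ hq₁pos n hn
    _ ≤ (exSC n H : ℝ) := by exact_mod_cast h1
  have lower2 : ∀ n : ℕ, 2*q₂ ≤ n → c₂ * (n:ℝ)^(k+t-2) ≤ (exSC n F : ℝ) := by
    intro n hn
    have h1 := exF_lower k t n hk ht
    calc c₂ * (n:ℝ)^(k+t-2) ≤ (((n / q₂) ^ q₂ : ℕ) : ℝ) := lower_gen q₂ hq₂pos n hn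
    _ ≤ (exSC n F : ℝ) := by exact_mod_cast h1
  have upper1 : ∀ n : ℕ, 1 ≤ n → (exSC n H : ℝ) ≤ C * (n:ℝ)^(k-1) := by
    intro n hn
    have h1 := exH_upper k t n hk ht
    have h2 : ∑ r ∈ Finset.range k, n.choose r + 2^(k+t) * n.choose (k-1) ≤
        k * n^(k-1) + 2^(k+t) * n^(k-1) := by
      have hs : ∑ r ∈ Finset.range k, n.choose r ≤ k * n^(k-1) := by
        calc ∑ r ∈ Finset.range k, n.choose r ≤ ∑ _r ∈ Finset.range k, n^(k-1) := by
              apply Finset.sum_le_sum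
              intro r hr
              rw [Finset.mem_range] at hr
              exact le_trans (choose_le_pow_aux n r) (Nat.pow_le_pow_right hn (by omega))
        _ = k * n^(k-1) := by rw [Finset.sum_const, Finset.card_range, smul_eq_mul]
      have hcb : 2^(k+t) * n.choose (k-1) ≤ 2^(k+t) * n^(k-1) :=
        Nat.mul_le_mul_left _ (choose_le_pow_aux n (k-1))
      omega
    have h3 := le_trans h1 h2
    calc (exSC n H : ℝ) ≤ ((k * n^(k-1) + 2^(k+t) * n^(k-1) : ℕ) : ℝ) := by exact_mod_cast h3
    _ = C * (n:ℝ)^(k-1) := by rw [hC]; push_cast; ring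
  set N : ℕ := 2*q₂ + 2*q₁ + 1 with hN
  refine ⟨⟨c₁, C, hc₁pos, hCpos, ?_⟩, ⟨c₂, hc₂pos, ?_⟩, ⟨c₂/C, by positivity, ?_⟩⟩
  · rw [Filter.eventually_atTop]
    exact ⟨N, fun n hn => ⟨lower1 n (by omega), upper1 n (by omega)⟩⟩
  · rw [Filter.eventually_atTop]
    exact ⟨N, fun n hn => lower2 n (by omega)⟩
  · rw [Filter.eventually_atTop]
    refine ⟨N, fun n hn => ?_⟩
    have hl2 := lower2 n (by omega)
    have hu1 := upper1 n (by omega)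
    have hl1 := lower1 n (by omega)
    have hnpos : (0:ℝ) < (n:ℝ) := by
      have : (1:ℕ) ≤ n := by omega
      exact_mod_cast this
    have hHpos : (0:ℝ) < (exSC n H : ℝ) :=
      lt_of_lt_of_le (mul_pos hc₁pos (pow_pos hnpos _)) hl1
    have key : c₂/C * (n:ℝ)^(t-1) = (c₂ * (n:ℝ)^(k+t-2)) / (C * (n:ℝ)^(k-1)) := by
      have hexp : (k+t-2) = (t-1) + (k-1) := by omega
      rw [hexp, pow_add]
      field_simp
    rw [key]
    exact div_le_div₀ (Nat.cast_nonneg _) hl2 hHpos hu1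
end
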